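/- arXiv:2004.00570 — 8 statements merged into one kernel-verified Lean document; each statement's English description precedes it below -/
import Mathlib

section
/- Consider a one-layer ReLU network with weight matrix W and a partition {X^(1),…,X^(p)} of the input uncertainty set X. Suppose l, u are preactivation bounds valid on X with l ≤ 0 ≤ u and l < u componentwise, and for each j, l^(j), u^(j) are preactivation bounds valid on X^(j) satisfying l ≤ l^(j) ≤ 0 ≤ u^(j) ≤ u and l^(j) < u^(j) componentwise. Then max_{j∈{1,…,p}} f̂*(X^(j); l^(j), u^(j)) ≤ f̂*(X; l, u); i.e., partitioning tightens the LP relaxation bound. -/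
/-!
A point `(x, z)` feasible for the relaxation on a part `X⁽ʲ⁾` is feasible for the relaxation
on `X`: for `x ∈ X⁽ʲ⁾` the preactivation lies in `[l⁽ʲ⁾, u⁽ʲ⁾] ⊆ [l, u]`, and there the upper
chord of `ReLU` over the smaller interval lies below the chord over the larger one. Hence each
part's set of LP values is contained in the global one, and so is its maximum.
-/

/-- Membership of `(x, z)` in the relaxed ReLU network constraint set `N(W, l, u)`. -/
def InRelax {nx nz : ℕ} (W : Matrix (Fin nz) (Fin nx) ℝ) (l u : Fin nz → ℝ)
    (x : Fin nx → ℝ) (z : Fin nz → ℝ) : Prop :=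
  ∀ i, 0 ≤ z i ∧ W.mulVec x i ≤ z i ∧
    z i ≤ u i * (W.mulVec x i - l i) / (u i - l i)

/-- Values `cᵀ z` over the LP relaxation feasible set `{(x,z) : x ∈ X, (x,z) ∈ N(W,l,u)}`. -/
def hatVals {nx nz : ℕ} (W : Matrix (Fin nz) (Fin nx) ℝ) (c : Fin nz → ℝ)
    (X : Set (Fin nx → ℝ)) (l u : Fin nz → ℝ) : Set ℝ :=
  {v | ∃ x z, x ∈ X ∧ InRelax W l u x z ∧ v = ∑ i, c i * z i}

lemma relu_chord_le_of_subinterval {l u l' u' t : ℝ} (hl : l ≤ l') (hl' : l' ≤ 0)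
    (hu' : 0 ≤ u') (hu : u' ≤ u) (hlu' : l' < u') (ht : t ∈ Set.Icc l' u') :
    u' * (t - l') / (u' - l') ≤ u * (t - l) / (u - l) := by
  obtain ⟨htl, htu⟩ := ht
  rw [div_le_div_iff₀ (by linarith) (by linarith)]
  -- The cross-multiplied difference is affine in `t` and nonnegative at `t = l'` and `t = u'`.
  have at_left : 0 ≤ (u' - t) * (u * (l' - l) * (u' - l')) :=
    mul_nonneg (by linarith) (mul_nonneg (mul_nonneg (by linarith) (by linarith)) (by linarith))
  have at_right : 0 ≤ (t - l') * ((u' - l') * -l * (u - u')) :=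
    mul_nonneg (by linarith) (mul_nonneg (mul_nonneg (by linarith) (by linarith)) (by linarith))
  nlinarith

lemma InRelax.of_subinterval {nx nz : ℕ} {W : Matrix (Fin nz) (Fin nx) ℝ}
    {l u l' u' : Fin nz → ℝ} {x : Fin nx → ℝ} {z : Fin nz → ℝ}
    (hbounds : ∀ i, l i ≤ l' i ∧ l' i ≤ 0 ∧ 0 ≤ u' i ∧ u' i ≤ u i ∧ l' i < u' i)
    (hx : ∀ i, l' i ≤ W.mulVec x i ∧ W.mulVec x i ≤ u' i)
    (hz : InRelax W l' u' x z) : InRelax W l u x z := by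
  intro i
  obtain ⟨hz_nonneg, hz_ge, hz_le⟩ := hz i
  obtain ⟨hl, hl', hu', hu, hlu'⟩ := hbounds i
  exact ⟨hz_nonneg, hz_ge, hz_le.trans (relu_chord_le_of_subinterval hl hl' hu' hu hlu' (hx i))⟩

lemma hatVals_subset_of_subinterval {nx nz : ℕ} {W : Matrix (Fin nz) (Fin nx) ℝ}
    {c : Fin nz → ℝ} {X Y : Set (Fin nx → ℝ)} {l u l' u' : Fin nz → ℝ} (hYX : Y ⊆ X)
    (hbounds : ∀ i, l i ≤ l' i ∧ l' i ≤ 0 ∧ 0 ≤ u' i ∧ u' i ≤ u i ∧ l' i < u' i)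
    (hvalid : ∀ x ∈ Y, ∀ i, l' i ≤ W.mulVec x i ∧ W.mulVec x i ≤ u' i) :
    hatVals W c Y l' u' ⊆ hatVals W c X l u := by
  rintro v ⟨x, z, hx, hz, rfl⟩
  exact ⟨x, z, hYX hx, hz.of_subinterval hbounds (hvalid x hx), rfl⟩

theorem partition_tightens_lp_relaxation_general {nx nz p : ℕ}
    (W : Matrix (Fin nz) (Fin nx) ℝ) (c : Fin nz → ℝ)
    (X : Set (Fin nx → ℝ)) (Xp : Fin p → Set (Fin nx → ℝ))
    -- `{X⁽ʲ⁾}` is a partition of `X`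
    (hcover : (⋃ j, Xp j) = X)
    (l u : Fin nz → ℝ)
    -- per-part bounds: valid on parts, with `l ≤ l⁽ʲ⁾ ≤ 0 ≤ u⁽ʲ⁾ ≤ u` and `l⁽ʲ⁾ < u⁽ʲ⁾`
    (lp up : Fin p → Fin nz → ℝ)
    (hpsign : ∀ j i, l i ≤ lp j i ∧ lp j i ≤ 0 ∧ 0 ≤ up j i ∧ up j i ≤ u i ∧
      lp j i < up j i)
    (hpvalid : ∀ j, ∀ x ∈ Xp j, ∀ i, lp j i ≤ W.mulVec x i ∧ W.mulVec x i ≤ up j i)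
    -- attained optimal values of the LP relaxations
    (Fhat : ℝ) (hFhat : IsGreatest (hatVals W c X l u) Fhat)
    (F : Fin p → ℝ)
    (hF : ∀ j, IsGreatest (hatVals W c (Xp j) (lp j) (up j)) (F j)) :
    (⨆ j, F j) ≤ Fhat := by
  cases isEmpty_or_nonempty (Fin p) with
  | inl _ =>
    -- `⨆` over no parts is the junk value `0`, but then `X = ∅` and `Fhat` is not attained.
    obtain ⟨x, -, hx, -⟩ := hFhat.1
    rw [← hcover] at hx
    exact (Set.mem_iUnion.1 hx).elim fun j _ => isEmptyElim j
  | inr _ =>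
    refine ciSup_le fun j => (hF j).mono hFhat ?_
    rw [← hcover]
    exact hatVals_subset_of_subinterval (Set.subset_iUnion Xp j) (hpsign j) (hpvalid j)

/-- Partitioning the input uncertainty set tightens the LP relaxation
bound: `max_j f̂*(X⁽ʲ⁾; l⁽ʲ⁾, u⁽ʲ⁾) ≤ f̂*(X; l, u)`.  All suprema are assumed attained
(`IsGreatest`). -/
theorem partition_tightens_lp_relaxation {nx nz p : ℕ}
    (W : Matrix (Fin nz) (Fin nx) ℝ) (c : Fin nz → ℝ)
    (X : Set (Fin nx → ℝ)) (Xp : Fin p → Set (Fin nx → ℝ))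
    -- `{X⁽ʲ⁾}` is a partition of `X`
    (hcover : (⋃ j, Xp j) = X)
    (hdisj : ∀ j k, j ≠ k → Xp j ∩ Xp k = ∅)
    -- bounds on `X`: valid, with `l ≤ 0 ≤ u` and `l < u`
    (l u : Fin nz → ℝ)
    (hsign : ∀ i, l i ≤ 0 ∧ 0 ≤ u i ∧ l i < u i)
    (hvalid : ∀ x ∈ X, ∀ i, l i ≤ W.mulVec x i ∧ W.mulVec x i ≤ u i)
    -- per-part bounds: valid on parts, with `l ≤ l⁽ʲ⁾ ≤ 0 ≤ u⁽ʲ⁾ ≤ u` and `l⁽ʲ⁾ < u⁽ʲ⁾`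
    (lp up : Fin p → Fin nz → ℝ)
    (hpsign : ∀ j i, l i ≤ lp j i ∧ lp j i ≤ 0 ∧ 0 ≤ up j i ∧ up j i ≤ u i ∧
      lp j i < up j i)
    (hpvalid : ∀ j, ∀ x ∈ Xp j, ∀ i, lp j i ≤ W.mulVec x i ∧ W.mulVec x i ≤ up j i)
    -- attained optimal values of the LP relaxations
    (Fhat : ℝ) (hFhat : IsGreatest (hatVals W c X l u) Fhat)
    (F : Fin p → ℝ)
    (hF : ∀ j, IsGreatest (hatVals W c (Xp j) (lp j) (up j)) (F j)) :
    (⨆ j, F j) ≤ Fhat :=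
  partition_tightens_lp_relaxation_general W c X Xp hcover l u lp up hpsign hpvalid Fhat hFhat F hF
end

section
/- Let W ∈ ℝ^{n_z×n_x} and let l, u, l', u' ∈ ℝ^{n_z} satisfy, componentwise, l ≤ l' ≤ 0 ≤ u' ≤ u, l' < u', and l < u. Then every pair (x,z) with l' ≤ Wx ≤ u' that belongs to the relaxed network constraint set N(W,l',u') also belongs to N(W,l,u); in particular, for every coordinate i and every x with l'_i ≤ w_iᵀx ≤ u'_i, one has u'_i(w_iᵀx − l'_i)/(u'_i − l'_i) ≤ u_i(w_iᵀx − l_i)/(u_i − l_i). -/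
/-!
On `[l, u]` with `l ≤ 0 ≤ u`, the map `y ↦ u (y − l)/(u − l)` is the chord of `ReLU` between `l`
and `u`, an affine function lying above `ReLU` there. The chord over the smaller interval
`[l', u']` is the affine interpolation of the `ReLU` values `0` and `u'` at `l'` and `u'`, and
the larger chord dominates both values, hence, being affine, dominates the smaller chord on
all of `[l', u']`.
-/

open Finset Matrix

noncomputable section

def reluChord (l u y : ℝ) : ℝ := u * (y - l) / (u - l)

section reluChord

variable {l u : ℝ}

theorem reluChord_left (l u : ℝ) : reluChord l u l = 0 := by
  simp [reluChord]

theorem reluChord_right (hlu : l < u) : reluChord l u u = u := by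
  rw [reluChord, mul_div_cancel_right₀ _ (sub_ne_zero.2 hlu.ne')]

theorem reluChord_convexComb (l u a b x y : ℝ) (hab : a + b = 1) :
    reluChord l u (a * x + b * y) = a * reluChord l u x + b * reluChord l u y := by
  obtain rfl : b = 1 - a := by linarith
  simp only [reluChord]
  ring

theorem max_le_reluChord (hl : l ≤ 0) (hu : 0 ≤ u) (hlu : l < u) {y : ℝ}
    (hly : l ≤ y) (hyu : y ≤ u) : max y 0 ≤ reluChord l u y := by
  have hul : 0 < u - l := sub_pos.2 hlu
  refine max_le ?_ ?_ <;> rw [reluChord, le_div_iff₀ hul] <;> nlinarith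

theorem reluChord_mono {l' u' : ℝ} (hl : l ≤ l') (hl' : l' ≤ 0) (hu' : 0 ≤ u') (hu : u' ≤ u)
    (hlu' : l' < u') {y : ℝ} (hly : l' ≤ y) (hyu : y ≤ u') :
    reluChord l' u' y ≤ reluChord l u y := by
  have hlu : l < u := by linarith
  obtain ⟨a, b, ha, hb, hab, rfl⟩ : y ∈ segment ℝ l' u' := by
    rw [segment_eq_Icc hlu'.le]
    exact ⟨hly, hyu⟩
  have hchord_l' : 0 ≤ reluChord l u l' :=
    (le_max_right _ _).trans (max_le_reluChord (hl.trans hl') (hu'.trans hu) hlu hl (by linarith))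
  have hchord_u' : u' ≤ reluChord l u u' :=
    (le_max_left _ _).trans (max_le_reluChord (hl.trans hl') (hu'.trans hu) hlu (by linarith) hu)
  simp only [smul_eq_mul]
  rw [reluChord_convexComb l' u' a b _ _ hab, reluChord_convexComb l u a b _ _ hab,
    reluChord_left, reluChord_right hlu']
  gcongr

end reluChord

theorem InRelax.mono_of_le {nx nz : ℕ} {W : Matrix (Fin nz) (Fin nx) ℝ} {l u l' u' : Fin nz → ℝ}
    {x : Fin nx → ℝ} {z : Fin nz → ℝ}
    (hle : ∀ i, reluChord (l' i) (u' i) (W.mulVec x i) ≤ reluChord (l i) (u i) (W.mulVec x i))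
    (hz : InRelax W l' u' x z) : InRelax W l u x z := fun i =>
  let ⟨hz0, hzW, hzu⟩ := hz i
  ⟨hz0, hzW, hzu.trans (hle i)⟩

/-- If `l ≤ l' ≤ 0 ≤ u' ≤ u`, `l' < u'`, and `l < u` componentwise, then
every pair `(x, z)` with `l' ≤ Wx ≤ u'` belonging to `N(W, l', u')` also belongs to
`N(W, l, u)`; in particular the upper envelope is monotone in the bounds. -/
theorem relaxed_constraint_monotone {nx nz : ℕ}
    (W : Matrix (Fin nz) (Fin nx) ℝ) (l u l' u' : Fin nz → ℝ)
    (hbounds : ∀ i, l i ≤ l' i ∧ l' i ≤ 0 ∧ 0 ≤ u' i ∧ u' i ≤ u i ∧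
      l' i < u' i ∧ l i < u i) :
    (∀ (x : Fin nx → ℝ) (z : Fin nz → ℝ),
      (∀ i, l' i ≤ W.mulVec x i ∧ W.mulVec x i ≤ u' i) →
      InRelax W l' u' x z → InRelax W l u x z) ∧
    (∀ (i : Fin nz) (x : Fin nx → ℝ),
      l' i ≤ W.mulVec x i → W.mulVec x i ≤ u' i →
      u' i * (W.mulVec x i - l' i) / (u' i - l' i) ≤
        u i * (W.mulVec x i - l i) / (u i - l i)) := by
  have hchord : ∀ (i : Fin nz) (x : Fin nx → ℝ), l' i ≤ W.mulVec x i → W.mulVec x i ≤ u' i →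
      reluChord (l' i) (u' i) (W.mulVec x i) ≤ reluChord (l i) (u i) (W.mulVec x i) :=
    fun i _ hly hyu =>
      let ⟨hl, hl', hu', hu, hlu', _⟩ := hbounds i
      reluChord_mono hl hl' hu' hu hlu' hly hyu
  exact ⟨fun x _ hx => InRelax.mono_of_le fun i => hchord i x (hx i).1 (hx i).2, hchord⟩
end
end

section
/- Let N be the relaxed network constraint set of a K-layer ReLU network built from preactivation bounds valid on a compact polytope X, and let c be a fixed cost vector. Then there exists a finite constant L ∈ ℝ such that for all x₁, x₂ ∈ X, |sup{cᵀz : (x₁,z) ∈ N} − sup{cᵀz : (x₂,z) ∈ N}| ≤ L‖x₁ − x₂‖₂; that is, the LP relaxation value is an L-Lipschitz function of the input on X. -/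
/-!
The relaxation is a polyhedron in the space of trajectories `(x⁰, …, x^K)`, cut out by fixed
linear inequalities whose right-hand sides depend on the input only through the equation `x⁰ = x`.
Valid bounds make the true trajectory feasible, and the triangle constraints bound every relaxed
trajectory layer by layer, so the LP values are finite suprema. By Hoffman's error bound, every
point of the polyhedron with right-hand side `b₁` lies within `C ∑ⱼ |b₁ⱼ - b₂ⱼ|` of the
(nonempty) polyhedron with right-hand side `b₂`, where `C` depends only on the rows; hence the
LP value is Lipschitz in the right-hand side, and so in the input.

For Hoffman's bound, project `x` onto the polyhedron, at `p`. By Farkas' lemma, `x - p` lies in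
the cone spanned by the rows active at `p`; by conic Carathéodory, it is a nonnegative combination
of linearly independent active rows, with total weight at most `C ‖x - p‖`. Pairing it with
`x - p` gives `‖x - p‖² ≤ C ‖x - p‖ · ∑ⱼ (aⱼ x - bⱼ)⁺`.
-/

open Finset Matrix

noncomputable section

/-- The forward map of a `K`-layer ReLU network. -/
def netFwd (n : ℕ → ℕ) (W : ∀ k : ℕ, Matrix (Fin (n (k + 1))) (Fin (n k)) ℝ) :
    ∀ K : ℕ, (Fin (n 0) → ℝ) → Fin (n K) → ℝ
  | 0, x => x
  | K + 1, x => fun i => max ((W K).mulVec (netFwd n W K x) i) 0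

/-- Membership of `(x, z)` in the relaxed network constraint set `N` of a `K`-layer
ReLU network built from preactivation bounds `l k, u k` at each layer. -/
def InNetRelax (n : ℕ → ℕ) (W : ∀ k : ℕ, Matrix (Fin (n (k + 1))) (Fin (n k)) ℝ)
    (l u : ∀ k : ℕ, Fin (n (k + 1)) → ℝ) (K : ℕ)
    (x : Fin (n 0) → ℝ) (z : Fin (n K) → ℝ) : Prop :=
  ∃ xs : ∀ k : ℕ, Fin (n k) → ℝ,
    xs 0 = x ∧ xs K = z ∧
    ∀ k < K, ∀ i,
      0 ≤ xs (k + 1) i ∧ (W k).mulVec (xs k) i ≤ xs (k + 1) i ∧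
      xs (k + 1) i ≤ u k i * ((W k).mulVec (xs k) i - l k i) / (u k i - l k i)

/-- The bounds `l, u` are valid on `S`. -/
def ValidBounds (n : ℕ → ℕ) (W : ∀ k : ℕ, Matrix (Fin (n (k + 1))) (Fin (n k)) ℝ)
    (l u : ∀ k : ℕ, Fin (n (k + 1)) → ℝ) (K : ℕ)
    (S : Set (EuclideanSpace ℝ (Fin (n 0)))) : Prop :=
  ∀ x ∈ S, ∀ k < K, ∀ i,
    l k i ≤ (W k).mulVec (netFwd n W k x) i ∧ (W k).mulVec (netFwd n W k x) i ≤ u k i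

open Filter Topology

open scoped InnerProductSpace

section FiniteCone

variable {ι H : Type*} [AddCommGroup H] [Module ℝ H]

def finiteCone (a : ι → H) (s : Finset ι) : Set H :=
  {v | ∃ μ : ι → ℝ, 0 ≤ μ ∧ ∑ j ∈ s, μ j • a j = v}

lemma finiteCone_mono (a : ι → H) {s t : Finset ι} (hts : t ⊆ s) :
    finiteCone a t ⊆ finiteCone a s := by
  classical
  rintro v ⟨μ, hμ, rfl⟩
  refine ⟨fun j => if j ∈ t then μ j else 0, fun j => ?_, ?_⟩
  · dsimp only
    split_ifs
    exacts [hμ j, le_rfl]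
  · simp only [ite_smul, zero_smul, sum_ite_mem, inter_eq_right.2 hts]

lemma finiteCone_eq_image (a : ι → H) (t : Finset ι) :
    finiteCone a t = Fintype.linearCombination ℝ (fun j : t => a j) '' Set.Ici 0 := by
  classical
  ext v
  constructor
  · rintro ⟨μ, hμ, rfl⟩
    refine ⟨fun j => μ j, fun j => hμ j, ?_⟩
    rw [Fintype.linearCombination_apply]
    exact sum_coe_sort t (fun j => μ j • a j)
  · rintro ⟨μ, hμ, rfl⟩
    refine ⟨fun j => if h : j ∈ t then μ ⟨j, h⟩ else 0, fun j => ?_, ?_⟩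
    · dsimp only
      split_ifs
      exacts [hμ _, le_rfl]
    · rw [Fintype.linearCombination_apply, ← sum_coe_sort]
      exact sum_congr rfl fun j _ => by simp

/-- The ratio test of the simplex method. -/
lemma exists_forall_mul_le_and_mul_eq (s : Finset ι) {μ g : ι → ℝ} (hμ : 0 ≤ μ)
    (hg : ∃ j ∈ s, 0 < g j) :
    ∃ τ : ℝ, ∃ j₀ ∈ s, (∀ j ∈ s, τ * g j ≤ μ j) ∧ τ * g j₀ = μ j₀ := by
  classical
  obtain ⟨j₀, hj₀, hmin⟩ := (s.filter (0 < g ·)).exists_min_image (fun j => μ j / g j)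
    (by simpa [Finset.Nonempty] using hg)
  rw [mem_filter] at hj₀
  refine ⟨μ j₀ / g j₀, j₀, hj₀.1, fun j hj => ?_, div_mul_cancel₀ _ hj₀.2.ne'⟩
  rcases lt_or_ge 0 (g j) with hgj | hgj
  · exact (le_div_iff₀ hgj).1 (hmin j (mem_filter.2 ⟨hj, hgj⟩))
  · exact (mul_nonpos_of_nonneg_of_nonpos (div_nonneg (hμ j₀) hj₀.2.le) hgj).trans (hμ j)

lemma exists_mem_finiteCone_erase [DecidableEq ι] {a : ι → H} {s : Finset ι} {v : H}
    (hv : v ∈ finiteCone a s) (hs : ¬LinearIndepOn ℝ a s) :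
    ∃ j₀ ∈ s, v ∈ finiteCone a (s.erase j₀) := by
  obtain ⟨μ, hμ, rfl⟩ := hv
  obtain ⟨g, hg, hpos⟩ : ∃ g : ι → ℝ, ∑ j ∈ s, g j • a j = 0 ∧ ∃ j ∈ s, 0 < g j := by
    simp only [linearIndepOn_finset_iff, not_forall] at hs
    obtain ⟨g, hg, j, hj, hgj⟩ := hs
    rcases lt_or_gt_of_ne hgj with hgj | hgj
    · exact ⟨-g, by simp [hg], j, hj, neg_pos.2 hgj⟩
    · exact ⟨g, hg, j, hj, hgj⟩
  -- move along the relation `g` until a first coefficient vanishes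
  obtain ⟨τ, j₀, hj₀, hle, heq⟩ := exists_forall_mul_le_and_mul_eq s hμ hpos
  refine ⟨j₀, hj₀, fun j => max (μ j - τ * g j) 0, fun j => le_max_right _ _, ?_⟩
  rw [sum_erase _ (by simp [heq])]
  calc ∑ j ∈ s, max (μ j - τ * g j) 0 • a j = ∑ j ∈ s, (μ j • a j - τ • g j • a j) :=
        sum_congr rfl fun j hj => by
          rw [max_eq_left (sub_nonneg.2 (hle j hj)), sub_smul, mul_smul]
    _ = ∑ j ∈ s, μ j • a j := by rw [sum_sub_distrib, ← smul_sum, hg, smul_zero, sub_zero]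

/-- Conic Carathéodory. -/
theorem exists_linearIndepOn_mem_finiteCone {a : ι → H} {s : Finset ι} {v : H}
    (hv : v ∈ finiteCone a s) : ∃ t ⊆ s, LinearIndepOn ℝ a t ∧ v ∈ finiteCone a t := by
  classical
  induction s using Finset.strongInduction with
  | H s ih =>
    by_cases hs : LinearIndepOn ℝ a s
    · exact ⟨s, subset_rfl, hs, hv⟩
    · obtain ⟨j₀, hj₀, hv'⟩ := exists_mem_finiteCone_erase hv hs
      obtain ⟨t, hts, ht, hvt⟩ := ih _ (erase_ssubset hj₀) hv'
      exact ⟨t, hts.trans (erase_subset _ _), ht, hvt⟩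

end FiniteCone

section Normed

variable {ι H : Type*} [NormedAddCommGroup H] [NormedSpace ℝ H]

lemma LinearIndepOn.isClosed_finiteCone {a : ι → H} {t : Finset ι} (ht : LinearIndepOn ℝ a t) :
    IsClosed (finiteCone a t) := by
  rw [finiteCone_eq_image]
  exact (LinearMap.isClosedEmbedding_of_injective
    (LinearMap.ker_eq_bot.2 ht.fintypeLinearCombination_injective)).isClosedMap _ isClosed_Ici

lemma isClosed_finiteCone (a : ι → H) (s : Finset ι) : IsClosed (finiteCone a s) := by
  classical
  have hunion : finiteCone a s =
      ⋃ t ∈ s.powerset.filter (fun t : Finset ι => LinearIndepOn ℝ a t), finiteCone a t := by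
    refine subset_antisymm (fun v hv => ?_) (Set.iUnion₂_subset fun t ht => ?_)
    · obtain ⟨t, hts, ht, hvt⟩ := exists_linearIndepOn_mem_finiteCone hv
      exact Set.mem_biUnion (mem_filter.2 ⟨mem_powerset.2 hts, ht⟩) hvt
    · exact finiteCone_mono a (mem_powerset.1 (mem_filter.1 ht).1)
  rw [hunion]
  exact isClosed_biUnion_finset fun t ht => (mem_filter.1 ht).2.isClosed_finiteCone

lemma LinearIndepOn.exists_sum_le_mul_norm {a : ι → H} {t : Finset ι}
    (ht : LinearIndepOn ℝ a t) :
    ∃ C, ∀ μ : ι → ℝ, 0 ≤ μ → ∑ j ∈ t, μ j ≤ C * ‖∑ j ∈ t, μ j • a j‖ := by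
  have ht' : LinearIndependent ℝ (fun j : t => a j) := ht
  obtain ⟨K, -, hK⟩ := LinearMap.exists_antilipschitzWith _
    (LinearMap.ker_eq_bot.2 ht'.fintypeLinearCombination_injective)
  refine ⟨t.card * K, fun μ hμ => ?_⟩
  have h := ZeroHomClass.bound_of_antilipschitz _ hK (fun j : t => μ j)
  rw [Fintype.linearCombination_apply, sum_coe_sort t (fun j => μ j • a j)] at h
  calc ∑ j ∈ t, μ j = ∑ j : t, ‖(fun j : t => μ j) j‖ := by
        rw [← sum_coe_sort]
        exact sum_congr rfl fun j _ => (Real.norm_of_nonneg (hμ j)).symm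
    _ ≤ ∑ _j : t, ‖fun j : t => μ j‖ := sum_le_sum fun j _ => norm_le_pi_norm (fun j : t => μ j) j
    _ ≤ t.card * K * ‖∑ j ∈ t, μ j • a j‖ := by
        rw [sum_const, card_univ, Fintype.card_coe, nsmul_eq_mul, mul_assoc]
        gcongr

theorem exists_bounded_conic_repr [Fintype ι] (a : ι → H) :
    ∃ C, 0 ≤ C ∧ ∀ (s : Finset ι), ∀ v ∈ finiteCone a s, ∃ t ⊆ s, ∃ μ : ι → ℝ, 0 ≤ μ ∧
      ∑ j ∈ t, μ j • a j = v ∧ ∑ j ∈ t, μ j ≤ C * ‖v‖ := by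
  have hbound : ∀ t : Finset ι, ∃ C, LinearIndepOn ℝ a t →
      ∀ μ : ι → ℝ, 0 ≤ μ → ∑ j ∈ t, μ j ≤ C * ‖∑ j ∈ t, μ j • a j‖ := fun t => by
    by_cases ht : LinearIndepOn ℝ a t
    · obtain ⟨C, hC⟩ := ht.exists_sum_le_mul_norm
      exact ⟨C, fun _ => hC⟩
    · exact ⟨0, fun h => (ht h).elim⟩
  choose C hC using hbound
  obtain ⟨M, hM⟩ := Finite.exists_le C
  refine ⟨max M 0, le_max_right _ _, fun s v hv => ?_⟩
  obtain ⟨t, hts, ht, μ, hμ, rfl⟩ := exists_linearIndepOn_mem_finiteCone hv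
  exact ⟨t, hts, μ, hμ, rfl,
    (hC t ht μ hμ).trans (by gcongr; exact (hM t).trans (le_max_left _ _))⟩

def polyhedron (φ : ι → StrongDual ℝ H) (b : ι → ℝ) : Set H := {x | ∀ j, φ j x ≤ b j}

lemma mem_polyhedron {φ : ι → StrongDual ℝ H} {b : ι → ℝ} {x : H} :
    x ∈ polyhedron φ b ↔ ∀ j, φ j x ≤ b j := Iff.rfl

lemma polyhedron_eq_iInter (φ : ι → StrongDual ℝ H) (b : ι → ℝ) :
    polyhedron φ b = ⋂ j, {x | φ j x ≤ b j} := by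
  ext
  simp [mem_polyhedron]

lemma convex_polyhedron (φ : ι → StrongDual ℝ H) (b : ι → ℝ) : Convex ℝ (polyhedron φ b) := by
  rw [polyhedron_eq_iInter]
  exact convex_iInter fun j => convex_halfSpace_le (φ j).toLinearMap.isLinear (b j)

lemma isClosed_polyhedron (φ : ι → StrongDual ℝ H) (b : ι → ℝ) : IsClosed (polyhedron φ b) := by
  rw [polyhedron_eq_iInter]
  exact isClosed_iInter fun j => isClosed_le (φ j).continuous continuous_const

end Normed

section Hilbert

variable {ι H : Type*} [NormedAddCommGroup H] [InnerProductSpace ℝ H]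

lemma norm_le_mul_of_eq_sum_smul {a : ι → H} {t : Finset ι} {μ : ι → ℝ} {w : H} {C R : ℝ}
    (hμ : 0 ≤ μ) (hw : ∑ j ∈ t, μ j • a j = w) (hμw : ∑ j ∈ t, μ j ≤ C * ‖w‖) (hC : 0 ≤ C)
    (hR : 0 ≤ R) (haw : ∀ j ∈ t, ⟪a j, w⟫_ℝ ≤ R) : ‖w‖ ≤ C * R := by
  have hsq : ‖w‖ * ‖w‖ ≤ C * R * ‖w‖ :=
    calc ‖w‖ * ‖w‖ = ⟪∑ j ∈ t, μ j • a j, w⟫_ℝ := by rw [hw, real_inner_self_eq_norm_mul_norm]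
      _ = ∑ j ∈ t, μ j * ⟪a j, w⟫_ℝ := by simp only [sum_inner, real_inner_smul_left]
      _ ≤ ∑ j ∈ t, μ j * R := sum_le_sum fun j hj => mul_le_mul_of_nonneg_left (haw j hj) (hμ j)
      _ = (∑ j ∈ t, μ j) * R := (sum_mul ..).symm
      _ ≤ C * R * ‖w‖ := by nlinarith
  rcases (norm_nonneg w).eq_or_lt with h | h
  · rw [← h]
    positivity
  · exact le_of_mul_le_mul_right hsq h

lemma inner_nonpos_of_forall_active [Finite ι] {φ : ι → StrongDual ℝ H} {b : ι → ℝ} {p w : H}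
    (hp : p ∈ polyhedron φ b) (hw : ∀ q ∈ polyhedron φ b, ⟪w, q - p⟫_ℝ ≤ 0) {d : H}
    (hd : ∀ j, φ j p = b j → φ j d ≤ 0) : ⟪w, d⟫_ℝ ≤ 0 := by
  have hev : ∀ᶠ t in 𝓝[>] (0 : ℝ), p + t • d ∈ polyhedron φ b := by
    simp only [mem_polyhedron, map_add, map_smul, smul_eq_mul]
    refine eventually_all.2 fun j => ?_
    rcases (hp j).eq_or_lt with hj | hj
    · filter_upwards [self_mem_nhdsWithin] with t (ht : 0 < t)
      nlinarith [hd j hj]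
    · have hcont : Tendsto (fun t : ℝ => φ j p + t * φ j d) (𝓝 0) (𝓝 (φ j p)) :=
        (continuous_const.add (continuous_id.mul continuous_const)).tendsto' 0 _ (by simp)
      exact ((hcont.eventually (gt_mem_nhds hj)).filter_mono nhdsWithin_le_nhds).mono
        fun t ht => ht.le
  obtain ⟨t, ht, htpos⟩ := (hev.and self_mem_nhdsWithin).exists
  have := hw _ ht
  rw [add_sub_cancel_left, real_inner_smul_right] at this
  exact nonpos_of_mul_nonpos_right this htpos

variable [CompleteSpace H]

/-- Farkas' lemma for a finitely generated cone. -/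
theorem mem_finiteCone_of_forall_inner_nonpos {a : ι → H} {s : Finset ι} {v : H}
    (h : ∀ d, (∀ j ∈ s, ⟪a j, d⟫_ℝ ≤ 0) → ⟪v, d⟫_ℝ ≤ 0) : v ∈ finiteCone a s := by
  classical
  let C : ProperCone ℝ H :=
    { toSubmodule := PointedCone.ofConeComb (finiteCone a s) ⟨0, 0, le_rfl, by simp⟩
        fun _ ⟨μ, hμ, hx⟩ _ ⟨ν, hν, hy⟩ α hα β hβ =>
          ⟨α • μ + β • ν, add_nonneg (smul_nonneg hα hμ) (smul_nonneg hβ hν), by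
            simp [← hx, ← hy, add_smul, mul_smul, sum_add_distrib, smul_sum]⟩
      isClosed' := isClosed_finiteCone a s }
  by_contra hv
  obtain ⟨y, hy, hvy⟩ := C.hyperplane_separation' hv
  have hmem : ∀ j ∈ s, a j ∈ C := fun j hj =>
    ⟨Pi.single j 1, Pi.single_nonneg.2 zero_le_one, by simp [Pi.single_apply, hj]⟩
  have := h (-y) fun j hj => by
    rw [inner_neg_right, neg_nonpos]
    exact hy _ (hmem j hj)
  rw [inner_neg_right] at this
  linarith

/-- Hoffman's error bound. -/
theorem exists_mem_polyhedron_norm_sub_le [Fintype ι] (φ : ι → StrongDual ℝ H) :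
    ∃ C, 0 ≤ C ∧ ∀ (b : ι → ℝ) (x : H), (polyhedron φ b).Nonempty →
      ∃ p ∈ polyhedron φ b, ‖x - p‖ ≤ C * ∑ j, max (φ j x - b j) 0 := by
  classical
  set a : ι → H := fun j => (InnerProductSpace.toDual ℝ H).symm (φ j)
  have ha : ∀ j y, ⟪a j, y⟫_ℝ = φ j y := fun _ _ => InnerProductSpace.toDual_symm_apply
  obtain ⟨C, hC, hCa⟩ := exists_bounded_conic_repr a
  refine ⟨C, hC, fun b x hne => ?_⟩
  obtain ⟨p, hp, hproj⟩ := exists_norm_eq_iInf_of_complete_convex hne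
    (isClosed_polyhedron φ b).isComplete (convex_polyhedron φ b) x
  have hnormal := (norm_eq_iInf_iff_real_inner_le_zero (convex_polyhedron φ b) hp).1 hproj
  have hcone : x - p ∈ finiteCone a (univ.filter fun j => φ j p = b j) :=
    mem_finiteCone_of_forall_inner_nonpos fun d hd =>
      inner_nonpos_of_forall_active hp hnormal fun j hj => by
        simpa [ha] using hd j (by simpa using hj)
  obtain ⟨t, htI, μ, hμ, hsum, hμle⟩ := hCa _ _ hcone
  refine ⟨p, hp, norm_le_mul_of_eq_sum_smul hμ hsum hμle hC
    (sum_nonneg fun j _ => le_max_right _ _) fun j hj => ?_⟩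
  rw [ha, map_sub, (mem_filter.1 (htI hj)).2]
  exact (le_max_left _ _).trans
    (single_le_sum (fun j _ => le_max_right (φ j x - b j) 0) (mem_univ j))

theorem exists_abs_sSup_image_sub_le [Fintype ι] (φ : ι → StrongDual ℝ H) (g : StrongDual ℝ H) :
    ∃ L, 0 ≤ L ∧ ∀ b₁ b₂ : ι → ℝ, (polyhedron φ b₁).Nonempty → (polyhedron φ b₂).Nonempty →
      BddAbove (g '' polyhedron φ b₁) → BddAbove (g '' polyhedron φ b₂) →
      |sSup (g '' polyhedron φ b₁) - sSup (g '' polyhedron φ b₂)| ≤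
        L * ∑ j, |b₁ j - b₂ j| := by
  obtain ⟨C, hC, hproj⟩ := exists_mem_polyhedron_norm_sub_le φ
  have key : ∀ b₁ b₂ : ι → ℝ, (polyhedron φ b₁).Nonempty → (polyhedron φ b₂).Nonempty →
      BddAbove (g '' polyhedron φ b₂) → sSup (g '' polyhedron φ b₁) ≤
        sSup (g '' polyhedron φ b₂) + ‖g‖ * C * ∑ j, |b₁ j - b₂ j| := by
    intro b₁ b₂ hne₁ hne₂ hbdd₂
    refine csSup_le (hne₁.image g) ?_
    rintro _ ⟨x, hx, rfl⟩
    obtain ⟨p, hp, hxp⟩ := hproj b₂ x hne₂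
    have hres : ∑ j, max (φ j x - b₂ j) 0 ≤ ∑ j, |b₁ j - b₂ j| :=
      sum_le_sum fun j _ =>
        max_le ((sub_le_sub_right (hx j) _).trans (le_abs_self _)) (abs_nonneg _)
    calc g x = g p + g (x - p) := by rw [map_sub]; ring
      _ ≤ sSup (g '' polyhedron φ b₂) + ‖g‖ * (C * ∑ j, |b₁ j - b₂ j|) := by
          gcongr
          · exact le_csSup hbdd₂ ⟨p, hp, rfl⟩
          · exact (le_abs_self _).trans
              ((g.le_opNorm _).trans (by gcongr; exact hxp.trans (by gcongr)))
      _ = _ := by ring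
  refine ⟨‖g‖ * C, by positivity, fun b₁ b₂ hne₁ hne₂ hbdd₁ hbdd₂ => abs_sub_le_iff.2 ⟨?_, ?_⟩⟩
  · linarith [key b₁ b₂ hne₁ hne₂ hbdd₂]
  · have := key b₂ b₁ hne₂ hne₁ hbdd₁
    simp_rw [abs_sub_comm (b₂ _)] at this
    linarith

end Hilbert

lemma max_zero_le_relaxation {l u z : ℝ} (hl : l ≤ 0) (hu : 0 ≤ u) (hlu : l < u) (hlz : l ≤ z)
    (hzu : z ≤ u) : max z 0 ≤ u * (z - l) / (u - l) := by
  rw [le_div_iff₀ (sub_pos.2 hlu)]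
  rcases le_total 0 z with hz | hz
  · rw [max_eq_left hz]
    nlinarith
  · rw [max_eq_right hz]
    nlinarith

lemma abs_le_of_le_relaxation {l u z y : ℝ} (hl : l ≤ 0) (hu : 0 ≤ u) (hlu : l < u) (hy : 0 ≤ y)
    (hyu : y ≤ u * (z - l) / (u - l)) : |y| ≤ |z| + |l| := by
  rw [le_div_iff₀ (sub_pos.2 hlu)] at hyu
  rw [abs_of_nonneg hy, abs_of_nonpos hl]
  by_contra! h
  rcases le_total l z with hz | hz
  · nlinarith [le_abs_self z]
  · nlinarith [abs_nonneg z]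

namespace ReluRelaxation

variable (n : ℕ → ℕ) (W : ∀ k : ℕ, Matrix (Fin (n (k + 1))) (Fin (n k)) ℝ)
  (l u : ∀ k : ℕ, Fin (n (k + 1)) → ℝ) (K : ℕ)

def IsRelaxedTrajectory (xs : ∀ k : ℕ, Fin (n k) → ℝ) : Prop :=
  ∀ k < K, ∀ i,
    0 ≤ xs (k + 1) i ∧ (W k).mulVec (xs k) i ≤ xs (k + 1) i ∧
    xs (k + 1) i ≤ u k i * ((W k).mulVec (xs k) i - l k i) / (u k i - l k i)

abbrev Traj := EuclideanSpace ℝ (Σ k : Fin (K + 1), Fin (n k))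

abbrev Neuron := Σ k : Fin K, Fin (n (k + 1))

abbrev Row := Fin (n 0) ⊕ Fin (n 0) ⊕ Neuron n K ⊕ Neuron n K ⊕ Neuron n K

variable {n K} in
def layers (ζ : Traj n K) (k : ℕ) (i : Fin (n k)) : ℝ :=
  if h : k < K + 1 then ζ ⟨⟨k, h⟩, i⟩ else 0

variable {n K} in
def ofLayers (xs : ∀ k : ℕ, Fin (n k) → ℝ) : Traj n K :=
  WithLp.toLp 2 fun p => xs p.1 p.2

def layerCLM (k : ℕ) (i : Fin (n k)) : StrongDual ℝ (Traj n K) :=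
  if h : k < K + 1 then EuclideanSpace.proj (⟨⟨k, h⟩, i⟩ : Σ k : Fin (K + 1), Fin (n k)) else 0

def preactCLM (k : ℕ) (i : Fin (n (k + 1))) : StrongDual ℝ (Traj n K) :=
  ∑ j, W k i j • layerCLM n K k j

/-- The equation `x⁰ = x` enters as two inequalities, and the upper bound of the triangle
relaxation is multiplied out by `u - l > 0`. -/
def relaxRow : Row n K → StrongDual ℝ (Traj n K)
  | .inl i => layerCLM n K 0 i
  | .inr (.inl i) => -layerCLM n K 0 i
  | .inr (.inr (.inl p)) => -layerCLM n K (p.1 + 1) p.2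
  | .inr (.inr (.inr (.inl p))) => preactCLM n W K p.1 p.2 - layerCLM n K (p.1 + 1) p.2
  | .inr (.inr (.inr (.inr p))) =>
      (u p.1 p.2 - l p.1 p.2) • layerCLM n K (p.1 + 1) p.2 - u p.1 p.2 • preactCLM n W K p.1 p.2

def relaxRhs (x : Fin (n 0) → ℝ) : Row n K → ℝ
  | .inl i => x i
  | .inr (.inl i) => -x i
  | .inr (.inr (.inr (.inr p))) => -(u p.1 p.2 * l p.1 p.2)
  | _ => 0

def relaxObjective (c : Fin (n K) → ℝ) : StrongDual ℝ (Traj n K) :=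
  ∑ i, c i • layerCLM n K K i

variable {n W l u K}

@[simp]
lemma layerCLM_apply (k : ℕ) (i : Fin (n k)) (ζ : Traj n K) :
    layerCLM n K k i ζ = layers ζ k i := by
  unfold layerCLM layers
  split_ifs <;> simp

@[simp]
lemma preactCLM_apply (k : ℕ) (i : Fin (n (k + 1))) (ζ : Traj n K) :
    preactCLM n W K k i ζ = (W k).mulVec (layers ζ k) i := by
  simp [preactCLM, Matrix.mulVec, dotProduct]

@[simp]
lemma relaxObjective_apply (c : Fin (n K) → ℝ) (ζ : Traj n K) :
    relaxObjective n K c ζ = ∑ i, c i * layers ζ K i := by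
  simp [relaxObjective]

lemma layers_ofLayers (xs : ∀ k : ℕ, Fin (n k) → ℝ) {k : ℕ} (hk : k ≤ K) :
    layers (ofLayers (K := K) xs) k = xs k := by
  ext i
  simp [layers, ofLayers, Nat.lt_succ_of_le hk]

lemma isRelaxedTrajectory_congr {xs ys : ∀ k : ℕ, Fin (n k) → ℝ} (h : ∀ k ≤ K, xs k = ys k) :
    IsRelaxedTrajectory n W l u K xs ↔ IsRelaxedTrajectory n W l u K ys :=
  forall₂_congr fun k hk => by rw [h k hk.le, h (k + 1) hk]

lemma isRelaxedTrajectory_iff_forall_neuron (xs : ∀ k : ℕ, Fin (n k) → ℝ) :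
    IsRelaxedTrajectory n W l u K xs ↔ ∀ p : Neuron n K,
      0 ≤ xs (p.1 + 1) p.2 ∧ (W p.1).mulVec (xs p.1) p.2 ≤ xs (p.1 + 1) p.2 ∧
      xs (p.1 + 1) p.2 ≤
        u p.1 p.2 * ((W p.1).mulVec (xs p.1) p.2 - l p.1 p.2) / (u p.1 p.2 - l p.1 p.2) :=
  ⟨fun h p => h p.1 p.1.2 p.2, fun h k hk i => h ⟨⟨k, hk⟩, i⟩⟩

lemma sum_abs_relaxRhs_sub_le (x₁ x₂ : EuclideanSpace ℝ (Fin (n 0))) :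
    ∑ j, |relaxRhs n l u K x₁ j - relaxRhs n l u K x₂ j| ≤ 2 * n 0 * ‖x₁ - x₂‖ := by
  calc _ = 2 * ∑ i, |x₁ i - x₂ i| := by
        simp [Fintype.sum_sum_type, relaxRhs, neg_add_eq_sub, abs_sub_comm (x₂ _)]
        ring
    _ ≤ 2 * ∑ _i : Fin (n 0), ‖x₁ - x₂‖ := by
        gcongr with i
        simpa using PiLp.norm_apply_le (x₁ - x₂) i
    _ = 2 * n 0 * ‖x₁ - x₂‖ := by
        rw [sum_const, card_univ, Fintype.card_fin, nsmul_eq_mul, mul_assoc]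

section

variable (hsign : ∀ k < K, ∀ i, l k i ≤ 0 ∧ 0 ≤ u k i ∧ l k i < u k i)
include hsign

lemma mem_polyhedron_relaxRow_iff (x : Fin (n 0) → ℝ) (ζ : Traj n K) :
    ζ ∈ polyhedron (relaxRow n W l u K) (relaxRhs n l u K x) ↔
      layers ζ 0 = x ∧ IsRelaxedTrajectory n W l u K (layers ζ) := by
  simp only [mem_polyhedron, Sum.forall, relaxRow, relaxRhs,
    isRelaxedTrajectory_iff_forall_neuron, _root_.neg_apply, _root_.sub_apply, _root_.smul_apply,
    smul_eq_mul, layerCLM_apply, preactCLM_apply, forall_and]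
  rw [← and_assoc]
  refine and_congr ?_ (and_congr (forall_congr' fun _ => neg_nonpos)
    (and_congr (forall_congr' fun _ => sub_nonpos) (forall_congr' fun p => ?_)))
  · simp only [neg_le_neg_iff, le_antisymm_iff, Pi.le_def]
  · rw [le_div_iff₀ (sub_pos.2 (hsign p.1 p.1.2 p.2).2.2)]
    constructor <;> intro h <;> linarith

lemma inNetRelax_iff (x : Fin (n 0) → ℝ) (z : Fin (n K) → ℝ) :
    InNetRelax n W l u K x z ↔
      ∃ ζ ∈ polyhedron (relaxRow n W l u K) (relaxRhs n l u K x), layers ζ K = z := by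
  simp only [mem_polyhedron_relaxRow_iff hsign]
  constructor
  · rintro ⟨xs, rfl, rfl, hxs⟩
    refine ⟨ofLayers xs, ⟨layers_ofLayers xs K.zero_le, ?_⟩, layers_ofLayers xs le_rfl⟩
    exact (isRelaxedTrajectory_congr fun k hk => layers_ofLayers xs hk).2 hxs
  · rintro ⟨ζ, ⟨h0, hζ⟩, rfl⟩
    exact ⟨layers ζ, h0, rfl, hζ⟩

lemma setOf_inNetRelax_eq_image (c : Fin (n K) → ℝ) (x : Fin (n 0) → ℝ) :
    {v | ∃ z, InNetRelax n W l u K x z ∧ v = ∑ i, c i * z i} =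
      relaxObjective n K c '' polyhedron (relaxRow n W l u K) (relaxRhs n l u K x) := by
  ext v
  simp only [Set.mem_ofPred, Set.mem_image, inNetRelax_iff hsign]
  constructor
  · rintro ⟨_, ⟨ζ, hζ, rfl⟩, rfl⟩
    exact ⟨ζ, hζ, relaxObjective_apply c ζ⟩
  · rintro ⟨ζ, hζ, rfl⟩
    exact ⟨_, ⟨ζ, hζ, rfl⟩, relaxObjective_apply c ζ⟩

lemma isRelaxedTrajectory_netFwd {x : Fin (n 0) → ℝ} (hx : ∀ k < K, ∀ i,
      l k i ≤ (W k).mulVec (netFwd n W k x) i ∧ (W k).mulVec (netFwd n W k x) i ≤ u k i) :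
    IsRelaxedTrajectory n W l u K (fun k => netFwd n W k x) := fun k hk i =>
  ⟨le_max_right _ _, le_max_left _ _, max_zero_le_relaxation (hsign k hk i).1 (hsign k hk i).2.1
    (hsign k hk i).2.2 (hx k hk i).1 (hx k hk i).2⟩

lemma nonempty_polyhedron_relaxRow {x : Fin (n 0) → ℝ} (hx : ∀ k < K, ∀ i,
      l k i ≤ (W k).mulVec (netFwd n W k x) i ∧ (W k).mulVec (netFwd n W k x) i ≤ u k i) :
    (polyhedron (relaxRow n W l u K) (relaxRhs n l u K x)).Nonempty :=
  let ⟨ζ, hζ, _⟩ := (inNetRelax_iff hsign x _).1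
    ⟨fun k => netFwd n W k x, rfl, rfl, isRelaxedTrajectory_netFwd hsign hx⟩
  ⟨ζ, hζ⟩

open scoped Matrix.Norms.Operator

lemma IsRelaxedTrajectory.norm_succ_le {xs : ∀ k : ℕ, Fin (n k) → ℝ}
    (hxs : IsRelaxedTrajectory n W l u K xs) {k : ℕ} (hk : k < K) :
    ‖xs (k + 1)‖ ≤ ‖W k‖ * ‖xs k‖ + ‖l k‖ := by
  refine (pi_norm_le_iff_of_nonneg (by positivity)).2 fun i => ?_
  calc ‖xs (k + 1) i‖ ≤ |(W k).mulVec (xs k) i| + |l k i| :=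
        abs_le_of_le_relaxation (hsign k hk i).1 (hsign k hk i).2.1 (hsign k hk i).2.2
          (hxs k hk i).1 (hxs k hk i).2.2
    _ ≤ ‖(W k).mulVec (xs k)‖ + ‖l k‖ :=
        add_le_add (norm_le_pi_norm ((W k).mulVec (xs k)) i) (norm_le_pi_norm (l k) i)
    _ ≤ ‖W k‖ * ‖xs k‖ + ‖l k‖ := by grw [Matrix.linfty_opNorm_mulVec]

lemma exists_forall_isRelaxedTrajectory_norm_le (x : Fin (n 0) → ℝ) :
    ∀ k ≤ K, ∃ R, ∀ xs : ∀ k : ℕ, Fin (n k) → ℝ, xs 0 = x →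
      IsRelaxedTrajectory n W l u K xs → ‖xs k‖ ≤ R := by
  intro k hk
  induction k with
  | zero => exact ⟨‖x‖, fun xs h0 _ => h0 ▸ le_rfl⟩
  | succ k ih =>
    obtain ⟨R, hR⟩ := ih (Nat.le_of_succ_le hk)
    exact ⟨‖W k‖ * R + ‖l k‖, fun xs h0 hxs =>
      (hxs.norm_succ_le hsign hk).trans (by grw [hR xs h0 hxs])⟩

lemma bddAbove_image_relaxObjective (c : Fin (n K) → ℝ) (x : Fin (n 0) → ℝ) :
    BddAbove (relaxObjective n K c '' polyhedron (relaxRow n W l u K) (relaxRhs n l u K x)) := by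
  obtain ⟨R, hR⟩ := exists_forall_isRelaxedTrajectory_norm_le hsign x K le_rfl
  refine ⟨∑ i, |c i| * R, ?_⟩
  rintro _ ⟨ζ, hζ, rfl⟩
  obtain ⟨h0, hζ⟩ := (mem_polyhedron_relaxRow_iff hsign x ζ).1 hζ
  rw [relaxObjective_apply]
  refine sum_le_sum fun i _ => (le_abs_self _).trans ?_
  rw [abs_mul]
  gcongr
  exact (norm_le_pi_norm (layers ζ K) i).trans (hR _ h0 hζ)

end

end ReluRelaxation

open ReluRelaxation

theorem lp_relaxation_is_lipschitz_general
    (n : ℕ → ℕ) (K : ℕ) (W : ∀ k : ℕ, Matrix (Fin (n (k + 1))) (Fin (n k)) ℝ)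
    (l u : ∀ k : ℕ, Fin (n (k + 1)) → ℝ)
    (hsign : ∀ k < K, ∀ i, l k i ≤ 0 ∧ 0 ≤ u k i ∧ l k i < u k i)
    (X : Set (EuclideanSpace ℝ (Fin (n 0))))
    (hvalid : ValidBounds n W l u K X)
    (c : Fin (n K) → ℝ) :
    ∃ L : ℝ, ∀ x₁ ∈ X, ∀ x₂ ∈ X,
      |sSup {v | ∃ z, InNetRelax n W l u K x₁ z ∧ v = ∑ i, c i * z i} -
        sSup {v | ∃ z, InNetRelax n W l u K x₂ z ∧ v = ∑ i, c i * z i}| ≤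
      L * ‖x₁ - x₂‖ := by
  obtain ⟨L, hL, hLip⟩ := exists_abs_sSup_image_sub_le (relaxRow n W l u K) (relaxObjective n K c)
  have hne x (hx : x ∈ X) := nonempty_polyhedron_relaxRow hsign (hvalid x hx)
  refine ⟨L * (2 * n 0), fun x₁ hx₁ x₂ hx₂ => ?_⟩
  rw [setOf_inNetRelax_eq_image hsign, setOf_inNetRelax_eq_image hsign]
  calc _ ≤ L * ∑ j, |relaxRhs n l u K x₁ j - relaxRhs n l u K x₂ j| :=
        hLip _ _ (hne x₁ hx₁) (hne x₂ hx₂) (bddAbove_image_relaxObjective hsign c x₁)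
          (bddAbove_image_relaxObjective hsign c x₂)
    _ ≤ L * (2 * n 0 * ‖x₁ - x₂‖) := by grw [sum_abs_relaxRhs_sub_le]
    _ = L * (2 * n 0) * ‖x₁ - x₂‖ := by ring

/-- Lipschitz LP relaxations: for a `K`-layer ReLU network with
relaxed network constraint set `N` built from valid preactivation bounds on a
compact polytope `X`, there is a finite `L` such that
`|sup{cᵀz : (x₁,z) ∈ N} − sup{cᵀz : (x₂,z) ∈ N}| ≤ L‖x₁ − x₂‖₂` for all
`x₁, x₂ ∈ X`. -/
theorem lp_relaxation_is_lipschitz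
    (n : ℕ → ℕ) (K : ℕ) (W : ∀ k : ℕ, Matrix (Fin (n (k + 1))) (Fin (n k)) ℝ)
    (l u : ∀ k : ℕ, Fin (n (k + 1)) → ℝ)
    (hsign : ∀ k < K, ∀ i, l k i ≤ 0 ∧ 0 ≤ u k i ∧ l k i < u k i)
    (X : Set (EuclideanSpace ℝ (Fin (n 0))))
    -- `X` is a (compact) polytope: the convex hull of finitely many points
    (hX : ∃ V : Finset (EuclideanSpace ℝ (Fin (n 0))), X = convexHull ℝ (V : Set _))
    (hvalid : ValidBounds n W l u K X)
    (c : Fin (n K) → ℝ) :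
    ∃ L : ℝ, ∀ x₁ ∈ X, ∀ x₂ ∈ X,
      |sSup {v | ∃ z, InNetRelax n W l u K x₁ z ∧ v = ∑ i, c i * z i} -
        sSup {v | ∃ z, InNetRelax n W l u K x₂ z ∧ v = ∑ i, c i * z i}| ≤
      L * ‖x₁ - x₂‖ :=
  lp_relaxation_is_lipschitz_general n K W l u hsign X hvalid c
end
end

section
/- Consider a one-layer ReLU network with weight matrix W whose i-th row is w_iᵀ, and a compact input uncertainty set X. For each sign pattern j ∈ {0,1}^{n_z}, define the input part X^(j) = {x ∈ X : w_iᵀx ≥ 0 for all i with j_i = 1, and w_iᵀx < 0 for all i with j_i = 0}, with per-part preactivation bounds l^(j), u^(j) given by l^(j)_i = 0 and u^(j)_i = u_i if j_i = 1, and l^(j)_i = l_i and u^(j)_i = 0 if j_i = 0, where l ≤ 0 ≤ u are bounds valid on X with l < u componentwise. Then the partitioned LP relaxation is exact: f*(X) = max_{j∈{0,1}^{n_z}} f̂*(X^(j); l^(j), u^(j)), where the supremum over an empty part is taken as −∞. -/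
open Finset Matrix

noncomputable section

/-- Values `cᵀ ReLU(Wx)` of the true network over `X`. -/
def trueVals {nx nz : ℕ} (W : Matrix (Fin nz) (Fin nx) ℝ) (c : Fin nz → ℝ)
    (X : Set (Fin nx → ℝ)) : Set ℝ :=
  {v | ∃ x ∈ X, v = ∑ i, c i * max (W.mulVec x i) 0}

/-- The input part for the sign pattern `s ∈ {0,1}^{n_z}` (encoded as
`s : Fin nz → Bool`). -/
def signPart {nx nz : ℕ} (W : Matrix (Fin nz) (Fin nx) ℝ) (X : Set (Fin nx → ℝ))
    (s : Fin nz → Bool) : Set (Fin nx → ℝ) :=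
  {x ∈ X | ∀ i, (s i = true → 0 ≤ W.mulVec x i) ∧ (s i = false → W.mulVec x i < 0)}

/-- Per-part lower preactivation bound: `l⁽ʲ⁾ᵢ = 0` if `jᵢ = 1`, else `lᵢ`. -/
def partL {nz : ℕ} (l : Fin nz → ℝ) (s : Fin nz → Bool) : Fin nz → ℝ :=
  fun i => if s i then 0 else l i

/-- Per-part upper preactivation bound: `u⁽ʲ⁾ᵢ = uᵢ` if `jᵢ = 1`, else `0`. -/
def partU {nz : ℕ} (u : Fin nz → ℝ) (s : Fin nz → Bool) : Fin nz → ℝ :=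
  fun i => if s i then u i else 0

/-!
The sign parts cover `X`. On a part, every neuron's bound interval `[l⁽ʲ⁾ᵢ, u⁽ʲ⁾ᵢ]` has `0` as
an endpoint, and over such an interval the triangle relaxation degenerates to the graph of the
ReLU: `zᵢ = w_iᵀx` on an active neuron and `zᵢ = 0` on an inactive one. Hence each part's
relaxed values are exactly its true values, and their union is the set of true values over `X`.
-/

theorem mul_div_self_of_le {a u : ℝ} (ha : 0 ≤ a) (hau : a ≤ u) : u * a / u = a := by
  rcases eq_or_ne u 0 with rfl | hu
  · simp [le_antisymm hau ha]
  · exact mul_div_cancel_left₀ a hu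

theorem iUnion_signPart {nx nz : ℕ} (W : Matrix (Fin nz) (Fin nx) ℝ) (X : Set (Fin nx → ℝ)) :
    ⋃ s, signPart W X s = X := by
  refine Set.Subset.antisymm (Set.iUnion_subset fun s x hx => hx.1) fun x hx => ?_
  refine Set.mem_iUnion.2 ⟨fun i => decide (0 ≤ W.mulVec x i), hx, fun i => ?_⟩
  simp

theorem trueVals_iUnion {ι : Type*} {nx nz : ℕ} (W : Matrix (Fin nz) (Fin nx) ℝ)
    (c : Fin nz → ℝ) (X : ι → Set (Fin nx → ℝ)) :
    trueVals W c (⋃ s, X s) = ⋃ s, trueVals W c (X s) := by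
  ext v
  simp only [trueVals, Set.mem_iUnion, Set.mem_ofPred_eq]
  grind

theorem inRelax_partL_partU_iff {nx nz : ℕ} {W : Matrix (Fin nz) (Fin nx) ℝ}
    {X : Set (Fin nx → ℝ)} {l u : Fin nz → ℝ} {s : Fin nz → Bool} {x : Fin nx → ℝ}
    (hx : x ∈ signPart W X s) (hxu : ∀ i, W.mulVec x i ≤ u i) (z : Fin nz → ℝ) :
    InRelax W (partL l s) (partU u s) x z ↔ z = fun i => max (W.mulVec x i) 0 := by
  rw [funext_iff]
  refine forall_congr' fun i => ?_
  cases hs : s i with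
  | true =>
    have hpos := (hx.2 i).1 hs
    simp only [partL, partU, hs, if_true, sub_zero, mul_div_self_of_le hpos (hxu i),
      max_eq_left hpos]
    constructor
    · rintro ⟨-, hlo, hhi⟩; exact le_antisymm hhi hlo
    · intro h; rw [h]; exact ⟨hpos, le_rfl, le_rfl⟩
  | false =>
    have hneg := (hx.2 i).2 hs
    simp only [partL, partU, hs, Bool.false_eq_true, if_false, zero_mul, zero_div,
      max_eq_right hneg.le]
    constructor
    · rintro ⟨h0, -, hhi⟩; exact le_antisymm hhi h0
    · intro h; rw [h]; exact ⟨le_rfl, hneg.le, le_rfl⟩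

theorem hatVals_signPart_eq_trueVals {nx nz : ℕ} (W : Matrix (Fin nz) (Fin nx) ℝ)
    (c : Fin nz → ℝ) (X : Set (Fin nx → ℝ)) (l u : Fin nz → ℝ)
    (hvalid : ∀ x ∈ X, ∀ i, W.mulVec x i ≤ u i) (s : Fin nz → Bool) :
    hatVals W c (signPart W X s) (partL l s) (partU u s) = trueVals W c (signPart W X s) := by
  ext v
  constructor
  · rintro ⟨x, z, hx, hz, rfl⟩
    rw [inRelax_partL_partU_iff hx (hvalid x hx.1) z] at hz
    exact ⟨x, hx, by rw [hz]⟩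
  · rintro ⟨x, hx, rfl⟩
    exact ⟨x, _, hx, (inRelax_partL_partU_iff hx (hvalid x hx.1) _).2 rfl, rfl⟩

theorem exact_partitioned_relaxation_general {nx nz : ℕ}
    (W : Matrix (Fin nz) (Fin nx) ℝ) (c : Fin nz → ℝ)
    (X : Set (Fin nx → ℝ)) (l u : Fin nz → ℝ)
    (hvalid : ∀ x ∈ X, ∀ i, l i ≤ W.mulVec x i ∧ W.mulVec x i ≤ u i)
    (fstar : ℝ) (hfstar : IsGreatest (trueVals W c X) fstar) :
    IsGreatest (⋃ s : Fin nz → Bool,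
      hatVals W c (signPart W X s) (partL l s) (partU u s)) fstar := by
  have hexact : ∀ s, hatVals W c (signPart W X s) (partL l s) (partU u s) =
      trueVals W c (signPart W X s) :=
    hatVals_signPart_eq_trueVals W c X l u fun x hx i => (hvalid x hx i).2
  simpa only [hexact, ← trueVals_iUnion, iUnion_signPart] using hfstar

/-- The sign-pattern partitioned LP relaxation is exact:
`f*(X) = max_{j ∈ {0,1}^{n_z}} f̂*(X⁽ʲ⁾; l⁽ʲ⁾, u⁽ʲ⁾)`.  This is expressed by saying
that the attained optimal value `fstar` of the unrelaxed problem is the greatest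
element of the union (over all sign patterns) of the relaxed value sets, so that
empty parts contribute nothing (the `−∞` convention). -/
theorem exact_partitioned_relaxation {nx nz : ℕ}
    (W : Matrix (Fin nz) (Fin nx) ℝ) (c : Fin nz → ℝ)
    (X : Set (Fin nx → ℝ)) (l u : Fin nz → ℝ)
    (hsign : ∀ i, l i ≤ 0 ∧ 0 ≤ u i ∧ l i < u i)
    (hvalid : ∀ x ∈ X, ∀ i, l i ≤ W.mulVec x i ∧ W.mulVec x i ≤ u i)
    (fstar : ℝ) (hfstar : IsGreatest (trueVals W c X) fstar) :
    IsGreatest (⋃ s : Fin nz → Bool,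
      hatVals W c (signPart W X s) (partL l s) (partU u s)) fstar :=
  exact_partitioned_relaxation_general W c X l u hvalid fstar hfstar
end
end

section
/- Consider a one-layer ReLU network with weight matrix W, compact input uncertainty set X, preactivation bounds l ≤ 0 ≤ u valid on X with l < u componentwise, and cost vector c. Assume there exists x* ∈ X such that (x*, z̃*) is optimal for the LP relaxation f̂*(X; l, u) and (x*, z*) with z* = ReLU(Wx*) is optimal for the unrelaxed problem f*(X). Then the relaxation error satisfies f̂*(X; l, u) − f*(X) ≤ −Σ_{i=1}^{n_z} max(c_i, 0) · u_i l_i/(u_i − l_i). -/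
/-! Since both optima are attained at the same input `x*`, the relaxation error splits into a
sum over neurons of `cᵢ (z̃ᵢ - ReLU(yᵢ))` with `yᵢ = (W x*)ᵢ`. When `cᵢ ≤ 0` the term is
nonpositive because `z̃ᵢ ≥ ReLU(yᵢ)`. When `cᵢ > 0` it is at most `cᵢ` times the height of the
upper face of the triangle relaxation above the ReLU graph, which is largest at the kink `y = 0`,
where it equals `-uᵢ lᵢ / (uᵢ - lᵢ)`. -/

open Finset Matrix

noncomputable section

theorem sub_max_zero_le_of_le_triangle {l u y z : ℝ} (hl : l ≤ 0) (hu : 0 ≤ u) (hlu : l < u)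
    (hz : z ≤ u * (y - l) / (u - l)) : z - max y 0 ≤ -(u * l / (u - l)) := by
  have hul : 0 < u - l := sub_pos.mpr hlu
  have hz' : z * (u - l) ≤ u * (y - l) := (le_div_iff₀ hul).mp hz
  rw [← neg_div, le_div_iff₀ hul]
  rcases le_total y 0 with hy | hy
  · rw [max_eq_right hy]
    nlinarith
  · rw [max_eq_left hy]
    nlinarith

theorem mul_sub_mul_max_zero_le_of_le_triangle {c l u y z : ℝ} (hl : l ≤ 0) (hu : 0 ≤ u)
    (hlu : l < u) (hyz : max y 0 ≤ z) (hz : z ≤ u * (y - l) / (u - l)) :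
    c * z - c * max y 0 ≤ -(max c 0 * (u * l) / (u - l)) := by
  rw [← mul_sub]
  rcases le_total c 0 with hc | hc
  · rw [max_eq_right hc, zero_mul, zero_div, neg_zero]
    exact mul_nonpos_of_nonpos_of_nonneg hc (sub_nonneg.mpr hyz)
  · rw [max_eq_left hc, mul_div_assoc, ← mul_neg]
    exact mul_le_mul_of_nonneg_left (sub_max_zero_le_of_le_triangle hl hu hlu hz) hc

theorem InRelax.sum_sub_sum_relu_le {nx nz : ℕ} {W : Matrix (Fin nz) (Fin nx) ℝ}
    {l u : Fin nz → ℝ} {x : Fin nx → ℝ} {z : Fin nz → ℝ} (c : Fin nz → ℝ)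
    (hsign : ∀ i, l i ≤ 0 ∧ 0 ≤ u i ∧ l i < u i) (h : InRelax W l u x z) :
    ∑ i, c i * z i - ∑ i, c i * max (W.mulVec x i) 0 ≤
      -∑ i, max (c i) 0 * (u i * l i) / (u i - l i) := by
  rw [← sum_sub_distrib, ← sum_neg_distrib]
  refine sum_le_sum fun i _ => ?_
  obtain ⟨hl, hu, hlu⟩ := hsign i
  obtain ⟨hz0, hWz, hz⟩ := h i
  exact mul_sub_mul_max_zero_le_of_le_triangle hl hu hlu (max_le hWz hz0) hz

theorem worst_case_relaxation_bound_general {nx nz : ℕ}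
    (W : Matrix (Fin nz) (Fin nx) ℝ) (c : Fin nz → ℝ)
    (l u : Fin nz → ℝ)
    (hsign : ∀ i, l i ≤ 0 ∧ 0 ≤ u i ∧ l i < u i)
    (fstar fhat : ℝ)
    (xstar : Fin nx → ℝ)
    (ztilde : Fin nz → ℝ) (hztilde : InRelax W l u xstar ztilde)
    (hopt_relaxed : ∑ i, c i * ztilde i = fhat)
    (hopt_true : ∑ i, c i * max (W.mulVec xstar i) 0 = fstar) :
    fhat - fstar ≤ -∑ i, max (c i) 0 * (u i * l i) / (u i - l i) := by
  rw [← hopt_relaxed, ← hopt_true]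
  exact hztilde.sum_sub_sum_relu_le c hsign

/-- worst-case relaxation bound: if some `x* ∈ X` is simultaneously
optimal for the LP relaxation `f̂*(X; l, u)` (with certificate `z̃*`) and for the
unrelaxed problem `f*(X)` (with `z* = ReLU(Wx*)`), then
`f̂*(X; l, u) − f*(X) ≤ −Σᵢ max(cᵢ, 0) · uᵢ lᵢ/(uᵢ − lᵢ)`. -/
theorem worst_case_relaxation_bound {nx nz : ℕ}
    (W : Matrix (Fin nz) (Fin nx) ℝ) (c : Fin nz → ℝ)
    (X : Set (Fin nx → ℝ)) (l u : Fin nz → ℝ)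
    (hsign : ∀ i, l i ≤ 0 ∧ 0 ≤ u i ∧ l i < u i)
    (hvalid : ∀ x ∈ X, ∀ i, l i ≤ W.mulVec x i ∧ W.mulVec x i ≤ u i)
    (fstar fhat : ℝ)
    (hfstar : IsGreatest (trueVals W c X) fstar)
    (hfhat : IsGreatest (hatVals W c X l u) fhat)
    (xstar : Fin nx → ℝ) (hxstar : xstar ∈ X)
    (ztilde : Fin nz → ℝ) (hztilde : InRelax W l u xstar ztilde)
    (hopt_relaxed : ∑ i, c i * ztilde i = fhat)
    (hopt_true : ∑ i, c i * max (W.mulVec xstar i) 0 = fstar) :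
    fhat - fstar ≤ -∑ i, max (c i) 0 * (u i * l i) / (u i - l i) :=
  worst_case_relaxation_bound_general W c l u hsign fstar fhat xstar ztilde hztilde hopt_relaxed
    hopt_true
end
end

section
/- Under the hypotheses of the worst-case relaxation bound (one-layer ReLU network, bounds l ≤ 0 ≤ u valid on X with l < u componentwise, and existence of a common input x* ∈ X optimal for both the LP relaxation and the unrelaxed problem over X), let X̃ ⊆ X be an input uncertainty subset whose valid preactivation bounds are the inward-scaled ũ = αu and l̃ = αl for some α ∈ (0,1), with these scaled bounds and the common-optimizer assumption holding for X̃. Then f̂*(X̃; αl, αu) − f*(X) ≤ −α · Σ_{i=1}^{n_z} max(c_i, 0) · u_i l_i/(u_i − l_i); i.e., the worst-case relaxation bound scales linearly by α. -/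
open Finset Matrix

noncomputable section

/-- The common-optimizer assumption for a set `S` with bounds `(l, u)`: there exists
`x* ∈ S` such that some `(x*, z̃*)` attains `f̂*(S; l, u) = fhat` and
`(x*, ReLU(Wx*))` attains `f*(S) = fstar`. -/
def CommonOptimizer {nx nz : ℕ} (W : Matrix (Fin nz) (Fin nx) ℝ) (c : Fin nz → ℝ)
    (S : Set (Fin nx → ℝ)) (l u : Fin nz → ℝ) (fstar fhat : ℝ) : Prop :=
  ∃ xstar ∈ S, (∃ ztilde : Fin nz → ℝ, InRelax W l u xstar ztilde ∧
      ∑ i, c i * ztilde i = fhat) ∧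
    ∑ i, c i * max (W.mulVec xstar i) 0 = fstar

/-! On `[l, u]` with `l ≤ 0 ≤ u`, the relaxation bounds `z` between `ReLU t` and the chord
`u (t - l) / (u - l)` of `ReLU`; the gap between chord and `ReLU` is largest at the kink `t = 0`,
where it equals `-u l / (u - l)`. Weighting by `max cᵢ 0` and summing bounds the relaxation gap at
the common optimizer of `X̃`, and scaling the bounds by `α` scales this value by `α`. Finally
`f*(X̃) ≤ f*(X)` since `X̃ ⊆ X`. -/

lemma chord_le_max_zero_add {l u t : ℝ} (hl : l ≤ 0) (hu : 0 ≤ u) (hlu : l < u) :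
    u * (t - l) / (u - l) ≤ max t 0 + -(u * l) / (u - l) := by
  have hD : 0 < u - l := sub_pos.mpr hlu
  have hkink : u * t ≤ (u - l) * max t 0 := by
    rcases le_total t 0 with ht | ht
    · rw [max_eq_right ht, mul_zero]
      exact mul_nonpos_of_nonneg_of_nonpos hu ht
    · rw [max_eq_left ht]
      nlinarith
  rw [div_le_iff₀ hD, add_mul, div_mul_cancel₀ _ hD.ne']
  linarith

lemma mul_le_max_zero_mul {a b : ℝ} (c : ℝ) (ha : 0 ≤ a) (hab : a ≤ b) :
    c * a ≤ max c 0 * b :=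
  (mul_le_mul_of_nonneg_right (le_max_left c 0) ha).trans
    (mul_le_mul_of_nonneg_left hab (le_max_right c 0))

/-- The worst-case relaxation bound, at a single relaxed point `(x, z)`. -/
theorem sum_mul_sub_sum_mul_relu_le_of_inRelax {nx nz : ℕ} {W : Matrix (Fin nz) (Fin nx) ℝ}
    {l u : Fin nz → ℝ} {x : Fin nx → ℝ} {z : Fin nz → ℝ} (c : Fin nz → ℝ)
    (hl : ∀ i, l i ≤ 0) (hu : ∀ i, 0 ≤ u i) (hlu : ∀ i, l i < u i) (hz : InRelax W l u x z) :
    ∑ i, c i * z i - ∑ i, c i * max (W.mulVec x i) 0 ≤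
      -∑ i, max (c i) 0 * (u i * l i) / (u i - l i) := by
  rw [← sum_sub_distrib, ← sum_neg_distrib]
  refine sum_le_sum fun i _ => ?_
  obtain ⟨hz0, hWz, hz_chord⟩ := hz i
  have hgap : z i - max (W.mulVec x i) 0 ≤ -(u i * l i) / (u i - l i) := by
    linarith [chord_le_max_zero_add (t := W.mulVec x i) (hl i) (hu i) (hlu i)]
  calc c i * z i - c i * max (W.mulVec x i) 0
      = c i * (z i - max (W.mulVec x i) 0) := (mul_sub _ _ _).symm
    _ ≤ max (c i) 0 * (-(u i * l i) / (u i - l i)) :=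
        mul_le_max_zero_mul _ (sub_nonneg.mpr (max_le hWz hz0)) hgap
    _ = -(max (c i) 0 * (u i * l i) / (u i - l i)) := by ring

lemma mul_mul_div_mul_sub_mul {α : ℝ} (hα : α ≠ 0) (u l : ℝ) :
    α * u * (α * l) / (α * u - α * l) = α * (u * l / (u - l)) := by
  rw [← mul_sub, mul_mul_mul_comm, mul_assoc, mul_div_mul_left _ _ hα, mul_div_assoc]

theorem linear_scaling_of_relaxation_error_general {nx nz : ℕ}
    (W : Matrix (Fin nz) (Fin nx) ℝ) (c : Fin nz → ℝ)
    (X : Set (Fin nx → ℝ)) (l u : Fin nz → ℝ)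
    -- hypotheses of the worst-case relaxation bound on `X`
    (hsign : ∀ i, l i ≤ 0 ∧ 0 ≤ u i ∧ l i < u i)
    (fstar : ℝ)
    (hfstar : IsGreatest (trueVals W c X) fstar)
    -- the scaled subset `X̃ ⊆ X` with bounds `αl`, `αu`
    (Xt : Set (Fin nx → ℝ)) (hXt : Xt ⊆ X)
    (α : ℝ) (hα : 0 < α ∧ α < 1)
    (fstarT fhatT : ℝ)
    (hcommonT : CommonOptimizer W c Xt (fun i => α * l i) (fun i => α * u i)
      fstarT fhatT) :
    fhatT - fstar ≤ -α * ∑ i, max (c i) 0 * (u i * l i) / (u i - l i) := by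
  obtain ⟨xs, hxs, ⟨zt, hzt, rfl⟩, rfl⟩ := hcommonT
  have hopt : ∑ i, c i * max (W.mulVec xs i) 0 ≤ fstar := hfstar.2 ⟨xs, hXt hxs, rfl⟩
  have hgap := sum_mul_sub_sum_mul_relu_le_of_inRelax c
    (fun i => mul_nonpos_of_nonneg_of_nonpos hα.1.le (hsign i).1)
    (fun i => mul_nonneg hα.1.le (hsign i).2.1)
    (fun i => mul_lt_mul_of_pos_left (hsign i).2.2 hα.1) hzt
  have hscale : ∑ i, max (c i) 0 * (α * u i * (α * l i)) / (α * u i - α * l i) =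
      α * ∑ i, max (c i) 0 * (u i * l i) / (u i - l i) := by
    simp only [mul_div_assoc, mul_mul_div_mul_sub_mul hα.1.ne', mul_sum]
    exact sum_congr rfl fun i _ => by ring
  linarith

/-- linear scaling of relaxation error: under the hypotheses of the
worst-case relaxation bound on `X`, if `X̃ ⊆ X` has valid inward-scaled bounds
`l̃ = αl`, `ũ = αu` with `α ∈ (0,1)` and the common-optimizer assumption holds for
`X̃`, then `f̂*(X̃; αl, αu) − f*(X) ≤ −α Σᵢ max(cᵢ, 0) · uᵢ lᵢ/(uᵢ − lᵢ)`. -/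
theorem linear_scaling_of_relaxation_error {nx nz : ℕ}
    (W : Matrix (Fin nz) (Fin nx) ℝ) (c : Fin nz → ℝ)
    (X : Set (Fin nx → ℝ)) (l u : Fin nz → ℝ)
    -- hypotheses of the worst-case relaxation bound on `X`
    (hsign : ∀ i, l i ≤ 0 ∧ 0 ≤ u i ∧ l i < u i)
    (hvalid : ∀ x ∈ X, ∀ i, l i ≤ W.mulVec x i ∧ W.mulVec x i ≤ u i)
    (fstar fhat : ℝ)
    (hfstar : IsGreatest (trueVals W c X) fstar)
    (hfhat : IsGreatest (hatVals W c X l u) fhat)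
    (hcommon : CommonOptimizer W c X l u fstar fhat)
    -- the scaled subset `X̃ ⊆ X` with bounds `αl`, `αu`
    (Xt : Set (Fin nx → ℝ)) (hXt : Xt ⊆ X)
    (α : ℝ) (hα : 0 < α ∧ α < 1)
    (hvalidt : ∀ x ∈ Xt, ∀ i, α * l i ≤ W.mulVec x i ∧ W.mulVec x i ≤ α * u i)
    (fstarT fhatT : ℝ)
    (hfstarT : IsGreatest (trueVals W c Xt) fstarT)
    (hfhatT : IsGreatest
      (hatVals W c Xt (fun i => α * l i) (fun i => α * u i)) fhatT)
    (hcommonT : CommonOptimizer W c Xt (fun i => α * l i) (fun i => α * u i)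
      fstarT fhatT) :
    fhatT - fstar ≤ -α * ∑ i, max (c i) 0 * (u i * l i) / (u i - l i) :=
  linear_scaling_of_relaxation_error_general W c X l u hsign fstar hfstar Xt hXt α hα fstarT fhatT
    hcommonT
end
end

section
/- Consider a one-layer ReLU network with weight matrix W (rows w_iᵀ), compact input uncertainty set X, preactivation bounds l ≤ 0 ≤ u valid on X with l < u componentwise, and cost vector c. Fix a coordinate i and the two-part partition X_i^(1) = {x ∈ X : w_iᵀx ≥ 0}, X_i^(2) = X \ X_i^(1), with per-part bounds (l^(1), u^(1)) obtained from (l,u) by replacing l_i with 0, and (l^(2), u^(2)) obtained by replacing u_i with 0. Assume the common-optimizer assumption holds on each part. Then the partitioned relaxation error satisfies max_{j∈{1,2}} f̂*(X_i^(j); l^(j), u^(j)) − f*(X) ≤ −Σ_{k≠i} max(c_k, 0) · u_k l_k/(u_k − l_k). -/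
open Finset Matrix

noncomputable section

lemma gap_bound {l u t z : ℝ} (hl : l ≤ 0) (hu : 0 ≤ u) (hlu : l ≤ u)
    (hz : z ≤ u * (t - l) / (u - l)) :
    z - max t 0 ≤ -(u * l) / (u - l) := by
  rcases eq_or_lt_of_le hlu with h | h
  · have hl0 : l = 0 := le_antisymm hl (h ▸ hu)
    have hu0 : u = 0 := h ▸ hl0
    subst hl0; subst hu0
    simp only [sub_zero, div_zero] at hz ⊢
    have := le_max_right t (0:ℝ)
    linarith
  · have hd : 0 < u - l := sub_pos.2 h
    have h1 : z * (u - l) ≤ u * (t - l) := (le_div_iff₀ hd).mp hz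
    rw [le_div_iff₀ hd]
    rcases le_total t 0 with ht | ht
    · rw [max_eq_right ht]; nlinarith
    · rw [max_eq_left ht]; nlinarith

lemma part_bound {nx nz : ℕ} (W : Matrix (Fin nz) (Fin nx) ℝ) (c : Fin nz → ℝ)
    (S : Set (Fin nx → ℝ)) (l' u' : Fin nz → ℝ)
    (hs : ∀ k, l' k ≤ 0 ∧ 0 ≤ u' k ∧ l' k ≤ u' k)
    (g F : ℝ) (hco : CommonOptimizer W c S l' u' g F) :
    F ≤ g + ∑ k, max (c k) 0 * (-(u' k * l' k) / (u' k - l' k)) := by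
  obtain ⟨x, hx, ⟨z, hz, hFz⟩, hg⟩ := hco
  rw [← hFz, ← hg, ← Finset.sum_add_distrib]
  apply Finset.sum_le_sum
  intro k _
  obtain ⟨hl, hu, hlu⟩ := hs k
  obtain ⟨hz0, hzW, hzu⟩ := hz k
  have hgap0 : 0 ≤ z k - max (W.mulVec x k) 0 := by
    have := max_le hzW hz0
    linarith
  have hgap : z k - max (W.mulVec x k) 0 ≤ -(u' k * l' k) / (u' k - l' k) :=
    gap_bound hl hu hlu hzu
  have hbnd : 0 ≤ -(u' k * l' k) / (u' k - l' k) := by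
    apply div_nonneg
    · nlinarith
    · linarith
  rcases le_total (c k) 0 with hc | hc
  · rw [max_eq_right hc]
    nlinarith
  · rw [max_eq_left hc]
    nlinarith

/-- two-part partition bound: partitioning `X` along the hyperplane
`{x : wᵢᵀx = 0}` into `X⁽¹⁾ = {x ∈ X : wᵢᵀx ≥ 0}` and `X⁽²⁾ = X \ X⁽¹⁾`, with the
bound `lᵢ` replaced by `0` on `X⁽¹⁾` and `uᵢ` replaced by `0` on `X⁽²⁾`, removes the
`i`-th term from the worst-case relaxation bound:
`max_j f̂*(Xᵢ⁽ʲ⁾; l⁽ʲ⁾, u⁽ʲ⁾) − f*(X) ≤ −Σ_{k≠i} max(c_k, 0) · u_k l_k/(u_k − l_k)`. -/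
theorem two_part_partition_bound {nx nz : ℕ}
    (W : Matrix (Fin nz) (Fin nx) ℝ) (c : Fin nz → ℝ)
    (X : Set (Fin nx → ℝ)) (l u : Fin nz → ℝ)
    (hsign : ∀ i, l i ≤ 0 ∧ 0 ≤ u i ∧ l i < u i)
    (hvalid : ∀ x ∈ X, ∀ i, l i ≤ W.mulVec x i ∧ W.mulVec x i ≤ u i)
    (i : Fin nz)
    (X1 X2 : Set (Fin nx → ℝ))
    (hX1 : X1 = {x ∈ X | 0 ≤ W.mulVec x i})
    (hX2 : X2 = X \ X1)
    -- attained value of the unrelaxed problem over `X`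
    (fstar : ℝ) (hfstar : IsGreatest (trueVals W c X) fstar)
    -- attained values of the relaxations and unrelaxed problems on the two parts
    (F1 F2 g1 g2 : ℝ)
    (hF1 : IsGreatest (hatVals W c X1 (Function.update l i 0) u) F1)
    (hF2 : IsGreatest (hatVals W c X2 l (Function.update u i 0)) F2)
    (hg1 : IsGreatest (trueVals W c X1) g1)
    (hg2 : IsGreatest (trueVals W c X2) g2)
    -- the common-optimizer assumption on each part
    (hcommon1 : CommonOptimizer W c X1 (Function.update l i 0) u g1 F1)
    (hcommon2 : CommonOptimizer W c X2 l (Function.update u i 0) g2 F2) :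
    max F1 F2 - fstar ≤
      -∑ k ∈ Finset.univ.erase i, max (c k) 0 * (u k * l k) / (u k - l k) := by

  have hX1sub : X1 ⊆ X := by rw [hX1]; exact Set.sep_subset _ _
  have hX2sub : X2 ⊆ X := by rw [hX2]; exact Set.diff_subset
  have hg1f : g1 ≤ fstar := by
    obtain ⟨x, hxm, hv⟩ := hg1.1
    exact hfstar.2 ⟨x, hX1sub hxm, hv⟩
  have hg2f : g2 ≤ fstar := by
    obtain ⟨x, hxm, hv⟩ := hg2.1
    exact hfstar.2 ⟨x, hX2sub hxm, hv⟩
  set B : ℝ := ∑ k ∈ Finset.univ.erase i, max (c k) 0 * (-(u k * l k) / (u k - l k)) with hB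
  have hs1 : ∀ k, Function.update l i 0 k ≤ 0 ∧ 0 ≤ u k ∧ Function.update l i 0 k ≤ u k := by
    intro k
    by_cases hk : k = i
    · subst hk; simp only [Function.update_self]
      exact ⟨le_refl 0, (hsign k).2.1, (hsign k).2.1⟩
    · simp only [Function.update_of_ne hk]
      exact ⟨(hsign k).1, (hsign k).2.1, le_of_lt (hsign k).2.2⟩
  have hs2 : ∀ k, l k ≤ 0 ∧ 0 ≤ Function.update u i 0 k ∧ l k ≤ Function.update u i 0 k := by
    intro k
    by_cases hk : k = i
    · subst hk; simp only [Function.update_self]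
      exact ⟨(hsign k).1, le_refl 0, (hsign k).1⟩
    · simp only [Function.update_of_ne hk]
      exact ⟨(hsign k).1, (hsign k).2.1, le_of_lt (hsign k).2.2⟩
  have hsum1 : ∑ k, max (c k) 0 *
      (-(u k * Function.update l i 0 k) / (u k - Function.update l i 0 k)) = B := by
    rw [← Finset.add_sum_erase Finset.univ _ (Finset.mem_univ i)]
    have h0 : max (c i) 0 * (-(u i * Function.update l i 0 i) / (u i - Function.update l i 0 i)) = 0 := by
      simp [Function.update_self]
    rw [h0, zero_add, hB]
    apply Finset.sum_congr rfl
    intro k hk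
    rw [Function.update_of_ne (Finset.ne_of_mem_erase hk)]
  have hsum2 : ∑ k, max (c k) 0 *
      (-(Function.update u i 0 k * l k) / (Function.update u i 0 k - l k)) = B := by
    rw [← Finset.add_sum_erase Finset.univ _ (Finset.mem_univ i)]
    have h0 : max (c i) 0 * (-(Function.update u i 0 i * l i) / (Function.update u i 0 i - l i)) = 0 := by
      simp [Function.update_self]
    rw [h0, zero_add, hB]
    apply Finset.sum_congr rfl
    intro k hk
    rw [Function.update_of_ne (Finset.ne_of_mem_erase hk)]
  have hF1b : F1 ≤ fstar + B := by
    have := part_bound W c X1 (Function.update l i 0) u hs1 g1 F1 hcommon1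
    rw [hsum1] at this
    linarith
  have hF2b : F2 ≤ fstar + B := by
    have := part_bound W c X2 l (Function.update u i 0) hs2 g2 F2 hcommon2
    rw [hsum2] at this
    linarith
  have hBeq : -∑ k ∈ Finset.univ.erase i, max (c k) 0 * (u k * l k) / (u k - l k) = B := by
    rw [hB, ← Finset.sum_neg_distrib]
    apply Finset.sum_congr rfl
    intro k _
    ring
  rw [hBeq]
  have := max_le hF1b hF2b
  linarith
end
end

section
/- Consider a one-layer ReLU network with weight matrix W (rows w_iᵀ), preactivation bounds l ≤ 0 ≤ u with l < u componentwise, and cost vector c. For any fixed x with l ≤ Wx ≤ u, the inner LP over the relaxed network constraint set has the closed-form value sup{cᵀz : (x,z) ∈ N(W,l,u)} = Σ_{i=1}^{n_z} [ max(c_i, 0) · u_i(w_iᵀx − l_i)/(u_i − l_i) + min(c_i, 0) · max(w_iᵀx, 0) ]. -/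
/-!
For fixed `x` the constraints of `N(W, l, u)` decouple coordinatewise: `z` ranges over the box
`max(Wx, 0) ≤ z ≤ u(Wx - l)/(u - l)`, which is nonempty because on `[l, u]` with `l ≤ 0 ≤ u`
the chord of the ReLU lies above it. A linear functional `cᵀz` is maximised over a box at the
corner taking the upper bound where `cᵢ ≥ 0` and the lower bound where `cᵢ < 0`.
-/

open Finset Matrix

noncomputable section

section Box

variable {R : Type*} [Ring R] [LinearOrder R]

theorem mul_ite_nonneg_eq_max_mul_add_min_mul (c lo hi : R) :
    c * (if 0 ≤ c then hi else lo) = max c 0 * hi + min c 0 * lo := by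
  split_ifs with hc
  · simp [max_eq_left hc, min_eq_right hc]
  · simp [max_eq_right (not_le.mp hc).le, min_eq_left (not_le.mp hc).le]

variable [IsOrderedRing R]

theorem mul_le_max_mul_add_min_mul {c lo hi z : R} (hlo : lo ≤ z) (hhi : z ≤ hi) :
    c * z ≤ max c 0 * hi + min c 0 * lo := by
  rcases le_total 0 c with hc | hc
  · simpa [max_eq_left hc, min_eq_right hc] using mul_le_mul_of_nonneg_left hhi hc
  · simpa [max_eq_right hc, min_eq_left hc] using mul_le_mul_of_nonpos_left hlo hc

theorem isGreatest_dotProduct_image_Icc {ι : Type*} [Fintype ι] (c lo hi : ι → R)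
    (h : lo ≤ hi) :
    IsGreatest (dotProduct c '' Set.Icc lo hi) (∑ i, (max (c i) 0 * hi i + min (c i) 0 * lo i)) := by
  refine ⟨⟨fun i => if 0 ≤ c i then hi i else lo i, ⟨fun i => ?_, fun i => ?_⟩, ?_⟩, ?_⟩
  · dsimp only; split_ifs <;> simp [h i]
  · dsimp only; split_ifs <;> simp [h i]
  · exact sum_congr rfl fun i _ => mul_ite_nonneg_eq_max_mul_add_min_mul _ _ _
  · rintro _ ⟨z, ⟨hlo, hhi⟩, rfl⟩
    exact sum_le_sum fun i _ => mul_le_max_mul_add_min_mul (hlo i) (hhi i)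

end Box

theorem inRelax_iff_mem_Icc {nx nz : ℕ} {W : Matrix (Fin nz) (Fin nx) ℝ} {l u : Fin nz → ℝ}
    {x : Fin nx → ℝ} {z : Fin nz → ℝ} :
    InRelax W l u x z ↔
      z ∈ Set.Icc (fun i => max ((W *ᵥ x) i) 0) (fun i => u i * ((W *ᵥ x) i - l i) / (u i - l i)) := by
  simp only [InRelax, Set.mem_Icc, Pi.le_def, max_le_iff, ← forall_and, and_comm, and_assoc]

theorem max_le_relaxUpper {a l u : ℝ} (hl : l ≤ 0) (hu : 0 ≤ u) (hlu : l < u)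
    (hla : l ≤ a) (hau : a ≤ u) : max a 0 ≤ u * (a - l) / (u - l) := by
  have hd : 0 < u - l := sub_pos.mpr hlu
  refine max_le ?_ (div_nonneg (mul_nonneg hu (sub_nonneg.mpr hla)) hd.le)
  rw [le_div_iff₀ hd]
  nlinarith

/-- For bounds `l ≤ 0 ≤ u`, `l < u`, and any fixed `x` with
`l ≤ Wx ≤ u`, the inner LP `sup{cᵀz : (x, z) ∈ N(W,l,u)}` has attained value
`Σᵢ [max(cᵢ,0)·uᵢ(wᵢᵀx − lᵢ)/(uᵢ − lᵢ) + min(cᵢ,0)·max(wᵢᵀx, 0)]`. -/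
theorem inner_lp_closed_form {nx nz : ℕ}
    (W : Matrix (Fin nz) (Fin nx) ℝ) (l u : Fin nz → ℝ) (c : Fin nz → ℝ)
    (hsign : ∀ i, l i ≤ 0 ∧ 0 ≤ u i ∧ l i < u i)
    (x : Fin nx → ℝ)
    (hx : ∀ i, l i ≤ W.mulVec x i ∧ W.mulVec x i ≤ u i) :
    IsGreatest {v | ∃ z : Fin nz → ℝ, InRelax W l u x z ∧ v = ∑ i, c i * z i}
      (∑ i, (max (c i) 0 * (u i * (W.mulVec x i - l i) / (u i - l i)) +
        min (c i) 0 * max (W.mulVec x i) 0)) := by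
  have hset : {v | ∃ z : Fin nz → ℝ, InRelax W l u x z ∧ v = ∑ i, c i * z i} =
      dotProduct c '' Set.Icc (fun i => max ((W *ᵥ x) i) 0)
        (fun i => u i * ((W *ᵥ x) i - l i) / (u i - l i)) := by
    ext v
    simp only [Set.mem_ofPred_eq, Set.mem_image, inRelax_iff_mem_Icc, dotProduct, eq_comm]
  rw [hset]
  exact isGreatest_dotProduct_image_Icc c _ _ fun i =>
    max_le_relaxUpper (hsign i).1 (hsign i).2.1 (hsign i).2.2 (hx i).1 (hx i).2
end
end
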